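/- Let p be a prime, E a nonempty finite subset of ℚ_p, and ν = ∑_{x∈E} α_x δ_x a discrete signed measure with nonzero integer coefficients α_x. Suppose ξ ∈ ℚ_p, ξ ≠ 0, and ν̂(ξ) = ∑_{x∈E} α_x conj(χ(ξx)) = 0. Then for every x ∈ E there exists x' ∈ E with x' ≠ x and |x - x'|_p ≤ p/|ξ|_p. -/

import Mathlib

open scoped BigOperators

/-- Every `p`-adic number is within distance `1` of a rational of the form `k / p^n`. -/
theorem padicFrac_exists (p : ℕ) [hp : Fact p.Prime] (x : ℚ_[p]) :
    ∃ kn : ℤ × ℕ, ‖x - (kn.1 : ℚ_[p]) / (p : ℚ_[p]) ^ kn.2‖ ≤ 1 := by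
  obtain ⟨n, hn⟩ := exists_nat_gt ‖x‖
  have hp1 : 1 < (p : ℝ) := by exact_mod_cast hp.out.one_lt
  have hple : (n : ℝ) < (p : ℝ) ^ n := by exact_mod_cast Nat.lt_pow_self (n := n) hp.out.one_lt
  have hz : ‖x * (p : ℚ_[p]) ^ n‖ ≤ 1 := by
    rw [norm_mul, norm_pow, Padic.norm_p]
    have h1 : ‖x‖ ≤ (p : ℝ) ^ n := le_of_lt (lt_trans hn hple)
    have h2 : (0:ℝ) < (p : ℝ) ^ n := by positivity
    calc ‖x‖ * ((p:ℝ)⁻¹) ^ n ≤ (p : ℝ) ^ n * ((p:ℝ)⁻¹) ^ n := by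
          gcongr
      _ = 1 := by rw [← mul_pow, mul_inv_cancel₀ (by linarith : (0:ℝ) < p).ne', one_pow]
  set z : ℤ_[p] := ⟨x * (p : ℚ_[p]) ^ n, hz⟩ with hzdef
  obtain ⟨y, hy⟩ := Ideal.mem_span_singleton'.mp (PadicInt.appr_spec n z)
  refine ⟨((z.appr n : ℤ), n), ?_⟩
  have hpne : ((p : ℚ_[p]) ^ n) ≠ 0 := by
    apply pow_ne_zero
    exact_mod_cast hp.out.ne_zero
  have hxz : x - ((z.appr n : ℤ) : ℚ_[p]) / (p : ℚ_[p]) ^ n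
      = ((z - (z.appr n : ℤ_[p]) : ℤ_[p]) : ℚ_[p]) / (p : ℚ_[p]) ^ n := by
    push_cast
    field_simp [hzdef]
    first | rfl | simp [hzdef]
  rw [hxz, norm_div]
  have hnorm : ‖((z - (z.appr n : ℤ_[p]) : ℤ_[p]) : ℚ_[p])‖ ≤ ((p:ℝ)⁻¹) ^ n := by
    rw [← PadicInt.norm_def, ← hy]
    rw [norm_mul, norm_pow, PadicInt.norm_p]
    calc ‖y‖ * ((p:ℝ)⁻¹) ^ n ≤ 1 * ((p:ℝ)⁻¹) ^ n := by
          gcongr; exact y.2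
      _ = ((p:ℝ)⁻¹) ^ n := one_mul _
  have hden : ‖(p : ℚ_[p]) ^ n‖ = ((p:ℝ)⁻¹) ^ n := by
    rw [norm_pow, Padic.norm_p]
  rw [hden]
  rw [div_le_one (by positivity)]
  exact hnorm

/-- The standard additive character `χ(x) = e^{2πi {x}}` on `ℚ_p`, where `{x}` is
the `p`-adic fractional part of `x`. -/
noncomputable def stdChar (p : ℕ) [Fact p.Prime] (x : ℚ_[p]) : ℂ :=
  Complex.exp (2 * Real.pi * Complex.I *
    (((Classical.choose (padicFrac_exists p x)).1 : ℂ) /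
      (p : ℂ) ^ (Classical.choose (padicFrac_exists p x)).2))

open Complex Polynomial Finset

private lemma aux_frac_diff_int (p : ℕ) [hp : Fact p.Prime] (k k' : ℤ) (n n' : ℕ)
    (h : ‖(k : ℚ_[p]) / (p:ℚ_[p])^n - (k' : ℚ_[p]) / (p:ℚ_[p])^n'‖ ≤ 1) :
    ∃ m : ℤ, k * (p:ℤ)^n' - k' * (p:ℤ)^n = (p:ℤ)^(n+n') * m := by
  have hp0 : (p:ℚ_[p]) ≠ 0 := by exact_mod_cast hp.out.ne_zero
  have hpR : (0:ℝ) < (p:ℝ) := by exact_mod_cast hp.out.pos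
  have key : ((k * (p:ℤ)^n' - k' * (p:ℤ)^n : ℤ) : ℚ_[p])
      = ((k:ℚ_[p])/(p:ℚ_[p])^n - (k':ℚ_[p])/(p:ℚ_[p])^n') * (p:ℚ_[p])^(n+n') := by
    push_cast
    field_simp
    ring
  have hnorm : ‖((k * (p:ℤ)^n' - k' * (p:ℤ)^n : ℤ) : ℚ_[p])‖ ≤ (p : ℝ) ^ (-((n+n' : ℕ)) : ℤ) := by
    rw [key, norm_mul, norm_pow, Padic.norm_p]
    calc ‖(k:ℚ_[p])/(p:ℚ_[p])^n - (k':ℚ_[p])/(p:ℚ_[p])^n'‖ * ((p:ℝ)⁻¹)^(n+n')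
        ≤ 1 * ((p:ℝ)⁻¹)^(n+n') := by gcongr
      _ = (p : ℝ) ^ (-((n+n' : ℕ)) : ℤ) := by
          rw [one_mul, zpow_neg, zpow_natCast, inv_pow]
  exact (Padic.norm_int_le_pow_iff_dvd _ _).1 hnorm

private lemma aux_geom (w : ℂ) (M : ℕ) (hw : w ^ M = 1) (h1 : w ≠ 1) :
    ∑ j ∈ Finset.range M, w ^ j = 0 := by
  rw [geom_sum_eq h1, hw]
  simp

private lemma aux_zpow_mod (ζ : ℂ) (M : ℕ) (hM : 0 < M) (hζ : ζ ^ M = 1) (d : ℤ) :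
    ζ ^ d = ζ ^ (d % (M:ℤ)).toNat := by
  have hζ0 : ζ ≠ 0 := by
    intro h0
    rw [h0, zero_pow hM.ne'] at hζ
    exact zero_ne_one hζ
  have hMZ : (0:ℤ) < (M:ℤ) := by exact_mod_cast hM
  conv_lhs => rw [← Int.emod_add_mul_ediv d (M:ℤ)]
  rw [zpow_add₀ hζ0, zpow_mul, zpow_natCast, hζ, one_zpow, mul_one,
    ← zpow_natCast, Int.toNat_of_nonneg (Int.emod_nonneg d hMZ.ne')]

private lemma aux_galois {ι : Type*} (s : Finset ι) (a : ι → ℤ) (e : ι → ℕ)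
    (M : ℕ) (hM : M ≠ 0) (ζ : ℂ) (hζ : IsPrimitiveRoot ζ M)
    (h : ∑ i ∈ s, (a i : ℂ) * ζ ^ e i = 0) (u : ℕ) (hu : Nat.Coprime u M) :
    ∑ i ∈ s, (a i : ℂ) * ζ ^ (u * e i) = 0 := by
  set f : Polynomial ℚ := ∑ i ∈ s, Polynomial.C (a i : ℚ) * Polynomial.X ^ e i with hf
  have heval : ∀ z : ℂ, Polynomial.aeval z f = ∑ i ∈ s, (a i : ℂ) * z ^ e i := by
    intro z
    rw [hf, map_sum]
    refine Finset.sum_congr rfl fun i _ => ?_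
    simp [map_mul, Polynomial.aeval_C, Polynomial.aeval_X_pow]
  have hroot : Polynomial.aeval ζ f = 0 := by rw [heval]; exact h
  have hdvd : Polynomial.cyclotomic M ℚ ∣ f := by
    rw [Polynomial.cyclotomic_eq_minpoly_rat hζ (Nat.pos_of_ne_zero hM)]
    exact minpoly.dvd ℚ ζ hroot
  obtain ⟨g, hg⟩ := hdvd
  have hprim : IsPrimitiveRoot (ζ ^ u) M := hζ.pow_of_coprime u hu
  have hcyc : Polynomial.aeval (ζ ^ u) (Polynomial.cyclotomic M ℚ) = 0 := by
    have hroot' := hprim.isRoot_cyclotomic (Nat.pos_of_ne_zero hM)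
    rw [Polynomial.IsRoot] at hroot'
    rw [Polynomial.aeval_def, ← Polynomial.eval_map, Polynomial.map_cyclotomic]
    exact hroot'
  have : Polynomial.aeval (ζ ^ u) f = 0 := by rw [hg, map_mul, hcyc, zero_mul]
  rw [heval] at this
  rw [← this]
  exact Finset.sum_congr rfl fun i _ => by rw [pow_mul]


theorem stmt9 (p : ℕ) [Fact p.Prime] (E : Finset ℚ_[p]) (hE : E.Nonempty)
    (α : ℚ_[p] → ℤ) (hα : ∀ x ∈ E, α x ≠ 0) (ξ : ℚ_[p]) (hξ : ξ ≠ 0)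
    (h : ∑ x ∈ E, (α x : ℂ) * (starRingEnd ℂ) (stdChar p (ξ * x)) = 0) :
    ∀ x ∈ E, ∃ x' ∈ E, x' ≠ x ∧ ‖x - x'‖ ≤ (p : ℝ) / ‖ξ‖ := by
  intro x₀ hx₀
  classical
  by_contra hcon
  push_neg at hcon
  have hp : p.Prime := Fact.out
  have hp1 : (1:ℝ) < (p:ℝ) := by exact_mod_cast hp.one_lt
  have hpp : (0:ℝ) < (p:ℝ) := by linarith
  -- chosen representatives
  set k : ℚ_[p] → ℤ := fun x => (Classical.choose (padicFrac_exists p (ξ * x))).1 with hk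
  set n : ℚ_[p] → ℕ := fun x => (Classical.choose (padicFrac_exists p (ξ * x))).2 with hn
  have hrep : ∀ x : ℚ_[p], ‖ξ * x - (k x : ℚ_[p]) / (p:ℚ_[p]) ^ (n x)‖ ≤ 1 :=
    fun x => Classical.choose_spec (padicFrac_exists p (ξ * x))
  have hchar : ∀ x : ℚ_[p], stdChar p (ξ * x)
      = Complex.exp (2 * (Real.pi:ℂ) * Complex.I * ((k x : ℂ)/(p:ℂ)^(n x))) := fun x => rfl
  set N : ℕ := E.sup n + 1 with hN
  have hnN : ∀ x ∈ E, n x ≤ N := fun x hx => le_trans (Finset.le_sup hx) (Nat.le_succ _)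
  set M : ℕ := p ^ N with hMdef
  have hM : M ≠ 0 := pow_ne_zero _ hp.ne_zero
  set θ : ℂ := 2 * (Real.pi:ℂ) * Complex.I / (M:ℂ) with hθ
  set ζ : ℂ := Complex.exp θ with hζdef
  have hζ : IsPrimitiveRoot ζ M := Complex.isPrimitiveRoot_exp M hM
  have hζM : ζ ^ M = 1 := hζ.pow_eq_one
  have hζ0 : ζ ≠ 0 := Complex.exp_ne_zero θ
  set m : ℚ_[p] → ℤ := fun x => -(k x) * (p:ℤ) ^ (N - n x) with hm
  -- conj character values are powers of ζ
  have hzpow : ∀ x ∈ E, (starRingEnd ℂ) (stdChar p (ξ * x)) = ζ ^ (m x) := by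
    intro x hx
    rw [hchar x, ← Complex.exp_conj, ← Complex.exp_int_mul]
    congr 1
    have hpow : (p:ℂ) ^ (N - n x) * (p:ℂ) ^ (n x) = (p:ℂ) ^ N := by
      rw [← pow_add, Nat.sub_add_cancel (hnN x hx)]
    have hp0 : (p:ℂ) ≠ 0 := by exact_mod_cast hp.ne_zero
    have hpn : (p:ℂ) ^ (n x) ≠ 0 := pow_ne_zero _ hp0
    have hpM : ((M:ℕ):ℂ) ≠ 0 := by exact_mod_cast hM
    rw [hθ]
    simp only [map_mul, map_div₀, Complex.conj_I, Complex.conj_ofReal, map_intCast,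
      map_natCast, map_pow, map_ofNat]
    have hMC : ((M:ℕ):ℂ) = (p:ℂ) ^ N := by rw [hMdef]; push_cast; ring
    rw [hMC]
    field_simp
    push_cast [hm]
    linear_combination ((k x):ℂ) * hpow

  -- base relation with ζ powers
  have hrel0 : ∑ x ∈ E, (α x : ℂ) * ζ ^ (m x) = 0 := by
    rw [← h]
    exact Finset.sum_congr rfl fun x hx => by rw [hzpow x hx]
  have hrel1 : ∑ x ∈ E, (α x : ℂ) * ζ ^ (m x - m x₀) = 0 := by
    have h2 := congrArg (fun z => z * ζ ^ (-(m x₀))) hrel0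
    simp only [Finset.sum_mul, zero_mul, mul_assoc, ← zpow_add₀ hζ0] at h2
    rw [← h2]
    exact Finset.sum_congr rfl fun x _ => by rw [sub_eq_add_neg]
  set e : ℚ_[p] → ℕ := fun x => ((m x - m x₀) % (M:ℤ)).toNat with he
  have hMpos : 0 < M := Nat.pos_of_ne_zero hM
  have hrel : ∑ x ∈ E, (α x : ℂ) * ζ ^ (e x) = 0 := by
    rw [← hrel1]
    refine Finset.sum_congr rfl fun x _ => ?_
    rw [aux_zpow_mod ζ M hMpos hζM (m x - m x₀)]
  have he₀ : e x₀ = 0 := by simp [he]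
  have hMZ0 : ((M:ℤ)) ≠ 0 := by exact_mod_cast hM
  have heq : ∀ x : ℚ_[p], ((p:ℤ) ^ (N-1) ∣ (e x : ℤ)) ↔ ((p:ℤ)^(N-1) ∣ (m x - m x₀)) := by
    intro x
    have h1 : ((e x : ℤ)) = (m x - m x₀) % (M:ℤ) :=
      Int.toNat_of_nonneg (Int.emod_nonneg _ hMZ0)
    have h2 : (p:ℤ)^(N-1) ∣ (M:ℤ) := by
      have hcast : ((M:ℕ):ℤ) = (p:ℤ)^N := by rw [hMdef]; push_cast; ring
      rw [hcast]
      exact pow_dvd_pow _ (Nat.sub_le N 1)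
    rw [Int.dvd_iff_emod_eq_zero, Int.dvd_iff_emod_eq_zero, h1,
      Int.emod_emod_of_dvd _ h2]
  -- the key claim
  have hclaim : ∀ x ∈ E, x ≠ x₀ → ¬ ((p:ℤ) ^ (N-1) ∣ (m x - m x₀)) := by
    intro x hx hne hdvd
    obtain ⟨d, hd⟩ := hdvd
    set y : ℚ_[p] := ξ * x₀ - ξ * x with hy
    have hy0 : y ≠ 0 := by
      rw [hy, ← mul_sub]
      exact mul_ne_zero hξ (sub_ne_zero.2 fun hxx => hne hxx.symm)
    have hξn : (0:ℝ) < ‖ξ‖ := norm_pos_iff.2 hξ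
    have hygt : (p:ℝ) < ‖y‖ := by
      have h4 := hcon x hx hne
      rw [div_lt_iff₀ hξn] at h4
      rw [hy, ← mul_sub, norm_mul]
      calc (p:ℝ) < ‖x₀ - x‖ * ‖ξ‖ := h4
        _ = ‖ξ‖ * ‖x₀ - x‖ := mul_comm _ _
    have hyge : (p:ℝ) ^ (2:ℤ) ≤ ‖y‖ := by
      rw [Padic.norm_eq_zpow_neg_valuation hy0] at hygt ⊢
      have hv : (1:ℤ) < -y.valuation := by
        by_contra hle
        push_neg at hle
        have h5 : (p:ℝ)^(-y.valuation) ≤ (p:ℝ)^(1:ℤ) :=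
          (zpow_le_zpow_iff_right₀ hp1).2 hle
        rw [zpow_one] at h5
        linarith
      exact (zpow_le_zpow_iff_right₀ hp1).2 (by omega)
    obtain ⟨⟨kd, nd⟩, hkd⟩ := padicFrac_exists p y
    simp only at hkd
    have h1y : (1:ℝ) < ‖y‖ := lt_trans hp1 hygt
    have hts : ‖(kd:ℚ_[p]) / (p:ℚ_[p])^nd‖ = ‖y‖ := by
      have hle1 : ‖(kd:ℚ_[p])/(p:ℚ_[p])^nd - y‖ ≤ 1 := by rw [norm_sub_rev]; exact hkd
      have hne2 : ‖y‖ ≠ ‖(kd:ℚ_[p])/(p:ℚ_[p])^nd - y‖ := by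
        intro hcontra; rw [← hcontra] at hle1; linarith
      have h6 := Padic.add_eq_max_of_ne hne2
      have h7 : y + ((kd:ℚ_[p])/(p:ℚ_[p])^nd - y) = (kd:ℚ_[p])/(p:ℚ_[p])^nd := by ring
      rw [h7] at h6
      rw [h6]
      exact max_eq_left (le_trans hle1 (le_of_lt h1y))
    have hkdn : ‖(kd:ℚ_[p])‖ = ‖y‖ * ((p:ℝ)⁻¹)^nd := by
      rw [← hts, norm_div, norm_pow, Padic.norm_p]
      have hpin : ((p:ℝ)⁻¹)^nd ≠ 0 := by positivity
      field_simp
    have hkd1 : ‖(kd:ℚ_[p])‖ ≤ 1 := Padic.norm_int_le_one kd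
    have hnd2 : 2 ≤ nd := by
      by_contra hlt
      push_neg at hlt
      have h8 : ‖y‖ * ((p:ℝ)⁻¹)^nd ≤ 1 := hkdn ▸ hkd1
      have h9 : (p:ℝ)^(2:ℤ) * ((p:ℝ)⁻¹)^nd ≤ 1 := by
        have := mul_le_mul_of_nonneg_right hyge (by positivity : (0:ℝ) ≤ ((p:ℝ)⁻¹)^nd)
        linarith
      have h10 : (p:ℝ)^(2:ℤ) * ((p:ℝ)⁻¹)^nd = (p:ℝ)^((2:ℤ) - nd) := by
        rw [zpow_sub₀ (ne_of_gt hpp), inv_pow, zpow_natCast]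
        ring
      rw [h10] at h9
      have h11 : (0:ℤ) < 2 - (nd:ℤ) := by omega
      have h12 : (p:ℝ)^(0:ℤ) < (p:ℝ)^((2:ℤ) - nd) := (zpow_lt_zpow_iff_right₀ hp1).2 h11
      rw [zpow_zero] at h12
      linarith
    -- combined representative and divisibility bookkeeping
    set K1 : ℤ := k x₀ * (p:ℤ)^(n x) - k x * (p:ℤ)^(n x₀) with hK1
    set n1 : ℕ := n x₀ + n x with hn1
    have hpQ : (p:ℚ_[p]) ≠ 0 := by exact_mod_cast hp.ne_zero
    have hyt1 : ‖y - (K1:ℚ_[p])/(p:ℚ_[p])^n1‖ ≤ 1 := by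
      have e1 : y - (K1:ℚ_[p])/(p:ℚ_[p])^n1
          = (ξ*x₀ - (k x₀:ℚ_[p])/(p:ℚ_[p])^(n x₀)) + -(ξ*x - (k x:ℚ_[p])/(p:ℚ_[p])^(n x)) := by
        rw [hy, hK1, hn1]
        push_cast
        field_simp
        ring
      rw [e1]
      refine le_trans (Padic.nonarchimedean _ _) (max_le (hrep x₀) ?_)
      rw [norm_neg]; exact hrep x
    have htt : ‖(K1:ℚ_[p])/(p:ℚ_[p])^n1 - (kd:ℚ_[p])/(p:ℚ_[p])^nd‖ ≤ 1 := by
      have e2 : (K1:ℚ_[p])/(p:ℚ_[p])^n1 - (kd:ℚ_[p])/(p:ℚ_[p])^nd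
          = (y - (kd:ℚ_[p])/(p:ℚ_[p])^nd) + -(y - (K1:ℚ_[p])/(p:ℚ_[p])^n1) := by ring
      rw [e2]
      refine le_trans (Padic.nonarchimedean _ _) (max_le hkd ?_)
      rw [norm_neg]; exact hyt1
    obtain ⟨c, hc⟩ := aux_frac_diff_int p K1 kd n1 nd htt
    have hpZ : (p:ℤ) ≠ 0 := by exact_mod_cast hp.ne_zero
    have hpow1 : (p:ℤ)^(N - n x) * (p:ℤ)^(n x) = (p:ℤ)^N := by
      rw [← pow_add, Nat.sub_add_cancel (hnN x hx)]
    have hpow2 : (p:ℤ)^(N - n x₀) * (p:ℤ)^(n x₀) = (p:ℤ)^N := by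
      rw [← pow_add, Nat.sub_add_cancel (hnN x₀ hx₀)]
    have hNpow : (p:ℤ)^(N-1) * (p:ℤ) = (p:ℤ)^N := by
      rw [← pow_succ]; congr 1
    have hkey : (m x - m x₀) * (p:ℤ)^n1 = K1 * (p:ℤ)^N := by
      simp only [hm, hK1, hn1]
      linear_combination (-(k x) * (p:ℤ)^(n x₀)) * hpow1 + ((k x₀) * (p:ℤ)^(n x)) * hpow2
    have hcancel1 : d * (p:ℤ)^n1 = K1 * (p:ℤ) := by
      apply mul_left_cancel₀ (pow_ne_zero (N-1) hpZ)
      linear_combination hkey - (p:ℤ)^n1 * hd - K1 * hNpow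
    have hcancel2 : kd * (p:ℤ) = (p:ℤ)^nd * (d - (p:ℤ)*c) := by
      apply mul_left_cancel₀ (pow_ne_zero n1 hpZ)
      linear_combination (-(p:ℤ)) * hc - (p:ℤ)^nd * hcancel1
    have hdvd2 : (p:ℤ)^(nd - 1) ∣ kd := by
      refine ⟨d - (p:ℤ)*c, ?_⟩
      apply mul_left_cancel₀ hpZ
      have hndpow : (p:ℤ) * (p:ℤ)^(nd-1) = (p:ℤ)^nd := by
        rw [← pow_succ']; congr 1; omega
      linear_combination hcancel2 - (d - (p:ℤ)*c) * hndpow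
    have hnormle : ‖(kd:ℚ_[p])‖ ≤ (p:ℝ)^(-((nd-1:ℕ):ℤ)) :=
      (Padic.norm_int_le_pow_iff_dvd kd (nd-1)).2 hdvd2
    have hge : (p:ℝ)^((2:ℤ) - nd) ≤ ‖(kd:ℚ_[p])‖ := by
      rw [hkdn]
      calc (p:ℝ)^((2:ℤ)-nd) = (p:ℝ)^(2:ℤ) * ((p:ℝ)⁻¹)^nd := by
            rw [zpow_sub₀ (ne_of_gt hpp), inv_pow, zpow_natCast]; ring
        _ ≤ ‖y‖ * ((p:ℝ)⁻¹)^nd := by gcongr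
    have hlt : (p:ℝ)^(-((nd-1:ℕ):ℤ)) < (p:ℝ)^((2:ℤ) - nd) := by
      apply (zpow_lt_zpow_iff_right₀ hp1).2
      have : ((nd-1:ℕ):ℤ) = (nd:ℤ) - 1 := by omega
      omega
    linarith
  -- convert claims to the ℕ exponents
  have hMdvdN : ∀ x ∈ E, x ≠ x₀ → ¬ ((p:ℕ) ^ (N-1) ∣ e x) := by
    intro x hx hne hdd
    exact hclaim x hx hne ((heq x).1 (by exact_mod_cast Int.natCast_dvd_natCast.2 hdd))
  -- Galois conjugates of the relation
  have hcop : ∀ j : ℕ, Nat.Coprime (1 + j * p) M := by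
    intro j
    apply Nat.Coprime.pow_right
    rw [Nat.coprime_comm]
    rw [Nat.Prime.coprime_iff_not_dvd hp]
    intro hdp
    have h13 : p ∣ 1 := (Nat.dvd_add_right (dvd_mul_left p j)).mp (by rwa [Nat.add_comm] at hdp)
    exact Nat.Prime.one_lt hp |>.ne' (Nat.dvd_one.1 h13)
  have hrelu : ∀ j : ℕ, ∑ x ∈ E, (α x : ℂ) * ζ ^ ((1 + j * p) * e x) = 0 := fun j =>
    aux_galois E α e M hM ζ hζ hrel (1 + j*p) (hcop j)
  have hbig : (0:ℂ) = ∑ x ∈ E, ∑ j ∈ Finset.range (p^(N-1)), (α x:ℂ) * ζ^((1+j*p) * e x) := by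
    rw [← Finset.sum_comm]
    symm
    apply Finset.sum_eq_zero
    intro j _
    exact hrelu j
  have hppow : (p:ℕ) * p^(N-1) = M := by
    rw [hMdef, ← pow_succ']; congr 1
  have hinner0 : ∀ x ∈ E, x ≠ x₀ →
      ∑ j ∈ Finset.range (p^(N-1)), (α x:ℂ) * ζ^((1+j*p) * e x) = 0 := by
    intro x hx hxx
    have hterm : ∀ j, (α x:ℂ) * ζ^((1+j*p) * e x) = ((α x:ℂ) * ζ^(e x)) * (ζ^(p * e x))^j := by
      intro j
      rw [mul_assoc, ← pow_mul, ← pow_add]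
      congr 2
      ring
    rw [Finset.sum_congr rfl fun j _ => hterm j, ← Finset.mul_sum]
    have hw1 : (ζ^(p * e x))^(p^(N-1)) = 1 := by
      rw [← pow_mul]
      have hmm : p * e x * p^(N-1) = M * e x := by
        rw [← hppow]; ring
      rw [hmm, pow_mul, hζM, one_pow]
    have hwne : ζ^(p * e x) ≠ 1 := by
      intro hone
      have hdd : M ∣ p * e x := (IsPrimitiveRoot.pow_eq_one_iff_dvd hζ _).1 hone
      rw [← hppow] at hdd
      have hdd2 : p^(N-1) ∣ e x := (Nat.mul_dvd_mul_iff_left hp.pos).1 hdd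
      exact hMdvdN x hx hxx hdd2
    rw [aux_geom _ _ hw1 hwne, mul_zero]
  have hbig2 : (0:ℂ) = ∑ j ∈ Finset.range (p^(N-1)), (α x₀:ℂ) * ζ^((1+j*p) * e x₀) := by
    rw [hbig, Finset.sum_eq_single_of_mem x₀ hx₀ hinner0]
  have hx0sum : ∑ j ∈ Finset.range (p^(N-1)), (α x₀:ℂ) * ζ^((1+j*p) * e x₀)
      = (α x₀:ℂ) * ((p^(N-1):ℕ):ℂ) := by
    simp [he₀, Finset.sum_const, Finset.card_range, nsmul_eq_mul]
    push_cast
    ring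
  rw [hx0sum] at hbig2
  have hα0 : (α x₀ : ℂ) = 0 := by
    have hpC : ((p^(N-1):ℕ):ℂ) ≠ 0 := Nat.cast_ne_zero.2 (pow_ne_zero _ hp.ne_zero)
    exact (mul_eq_zero.1 hbig2.symm).resolve_right hpC
  exact hα x₀ hx₀ (by exact_mod_cast hα0)
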